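/- arXiv:1405.4405 — 4 statements merged into one kernel-verified Lean document; each statement's English description precedes it below -/
import Mathlib

section
/- Let μ be a probability measure on ℝ supported on [0, ∞) and s > 0. If μ̄(x)·e^{x s} converges to a positive constant c > 0 as x → +∞, then for every natural number k ≥ 2 one has (μ^{∗k})‾(x)·e^{x s} → +∞ as x → +∞. -/
/-!
If `∫ e^{sy} dμ(y)` were finite, then `μ̄(x) e^{xs} ≤ ∫_{y > x} e^{sy} dμ(y) → 0`, contradicting
`c > 0`; so the exponential moment of `μ` is infinite. Write `μ^{∗k} = ν ∗ μ` with
`ν = μ^{∗(k-1)}`; since the remaining factors live on `[0, ∞)`, `ν̄ ≥ μ̄`, hence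
`ν̄(z) e^{zs} ≥ c/2` for `z ≥ M`. Then, splitting `e^{xs} = e^{(x-y)s} e^{ys}`,
`e^{xs} (ν ∗ μ)‾(x) = ∫ ν̄(x - y) e^{xs} dμ(y) ≥ (c/2) ∫_{y ≤ x - M} e^{ys} dμ(y) → ∞`.
-/

open MeasureTheory Filter Topology

/-- The tail function of a measure on `ℝ`: `μ̄(x) = μ((x, ∞))`, as a real number. -/
noncomputable def tail (μ : Measure ℝ) (x : ℝ) : ℝ := (μ (Set.Ioi x)).toReal

/-- The `k`-fold convolution power of a measure on `ℝ`, with `μ^{∗0} = δ₀` and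
`μ^{∗(k+1)} = μ^{∗k} ∗ μ` (so `μ^{∗1} = μ`). -/
noncomputable def convPow (μ : Measure ℝ) : ℕ → Measure ℝ
  | 0 => Measure.dirac 0
  | k + 1 => (convPow μ k).conv μ

open Set
open scoped ENNReal

namespace MeasureTheory.Measure

variable {M : Type*} [AddMonoid M] [MeasurableSpace M] [MeasurableAdd₂ M]

lemma conv_apply (ν μ : Measure M) [SFinite ν] [SFinite μ] {t : Set M} (ht : MeasurableSet t) :
    (ν ∗ μ) t = ∫⁻ y, ν ((· + y) ⁻¹' t) ∂μ := by
  rw [conv, map_apply measurable_add ht, prod_apply_symm (measurable_add ht)]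
  rfl

end MeasureTheory.Measure

open Measure

lemma ofReal_tail_mul (μ : Measure ℝ) [IsFiniteMeasure μ] (x r : ℝ) :
    ENNReal.ofReal (tail μ x * r) = μ (Ioi x) * ENNReal.ofReal r := by
  rw [tail, ENNReal.ofReal_mul ENNReal.toReal_nonneg, ENNReal.ofReal_toReal (measure_ne_top _ _)]

lemma ae_nonneg_of_measure_Iio_zero {μ : Measure ℝ} (hμ : μ (Iio 0) = 0) : ∀ᵐ y ∂μ, 0 ≤ y := by
  simpa using measure_eq_zero_iff_ae_notMem.1 hμ

lemma conv_Iio_zero {ν μ : Measure ℝ} [SFinite ν] [SFinite μ]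
    (hν : ν (Iio 0) = 0) (hμ : μ (Iio 0) = 0) : (ν ∗ μ) (Iio 0) = 0 := by
  rw [conv_apply _ _ measurableSet_Iio, ← lintegral_zero (μ := μ)]
  refine lintegral_congr_ae ?_
  filter_upwards [ae_nonneg_of_measure_Iio_zero hμ] with y hy
  exact measure_mono_null (fun z (hz : z + y < 0) => show z < 0 by linarith) hν

instance convPow.instIsProbabilityMeasure (μ : Measure ℝ) [IsProbabilityMeasure μ] :
    ∀ k, IsProbabilityMeasure (convPow μ k)
  | 0 => by rw [convPow]; infer_instance
  | k + 1 => by have := convPow.instIsProbabilityMeasure μ k; rw [convPow]; infer_instance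

lemma convPow_Iio_zero {μ : Measure ℝ} [IsProbabilityMeasure μ] (hμ : μ (Iio 0) = 0) :
    ∀ k, convPow μ k (Iio 0) = 0
  | 0 => by simp [convPow]
  | k + 1 => conv_Iio_zero (convPow_Iio_zero hμ k) hμ

lemma measure_Ioi_le_conv_Ioi {ρ μ : Measure ℝ} [IsProbabilityMeasure ρ] [SFinite μ]
    (hρ : ρ (Iio 0) = 0) (u : ℝ) : μ (Ioi u) ≤ (ρ ∗ μ) (Ioi u) := by
  rw [conv_comm, conv_apply _ _ measurableSet_Ioi]
  calc μ (Ioi u) = ∫⁻ _, μ (Ioi u) ∂ρ := by simp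
    _ ≤ ∫⁻ y, μ ((· + y) ⁻¹' Ioi u) ∂ρ := by
      refine lintegral_mono_ae ?_
      filter_upwards [ae_nonneg_of_measure_Iio_zero hρ] with y hy
      exact measure_mono fun z (hz : u < z) => show u < z + y by linarith

lemma tendsto_measure_Ioi_mul_atTop_zero {μ : Measure ℝ} {g : ℝ → ℝ≥0∞} (hg : Monotone g)
    (hint : ∫⁻ y, g y ∂μ ≠ ∞) : Tendsto (fun x => μ (Ioi x) * g x) atTop (𝓝 0) := by
  set ρ := μ.withDensity g
  have hρ : Tendsto (fun x => ρ (Ioi x)) atTop (𝓝 0) := by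
    have hempty : ⋂ x : ℝ, Ioi x = ∅ := iInter_eq_empty_iff.2 fun y => ⟨y, lt_irrefl y⟩
    have hfin : ρ univ ≠ ∞ := by rwa [withDensity_apply _ MeasurableSet.univ, Measure.restrict_univ]
    have := tendsto_measure_iInter_atTop (fun x => measurableSet_Ioi.nullMeasurableSet)
      antitone_Ioi ⟨0, ne_top_of_le_ne_top hfin (measure_mono (subset_univ _))⟩
    rwa [hempty, measure_empty] at this
  refine tendsto_of_tendsto_of_tendsto_of_le_of_le tendsto_const_nhds hρ (fun _ => zero_le)
    fun x => ?_
  calc μ (Ioi x) * g x = ∫⁻ _ in Ioi x, g x ∂μ := by rw [setLIntegral_const, mul_comm]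
    _ ≤ ∫⁻ y in Ioi x, g y ∂μ := setLIntegral_mono hg.measurable fun y hy => hg (le_of_lt hy)
    _ = ρ (Ioi x) := (withDensity_apply _ measurableSet_Ioi).symm

lemma lintegral_exp_mul_eq_top {μ : Measure ℝ} {s : ℝ} (hs : 0 ≤ s) {c : ℝ≥0∞} (hc : c ≠ 0)
    (h : Tendsto (fun x => μ (Ioi x) * ENNReal.ofReal (Real.exp (x * s))) atTop (𝓝 c)) :
    ∫⁻ y, ENNReal.ofReal (Real.exp (y * s)) ∂μ = ∞ := by
  by_contra hfin
  refine hc (tendsto_nhds_unique h (tendsto_measure_Ioi_mul_atTop_zero (fun a b hab => ?_) hfin))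
  gcongr

lemma tendsto_setLIntegral_Iic_atTop (μ : Measure ℝ) (g : ℝ → ℝ≥0∞) :
    Tendsto (fun X => ∫⁻ y in Iic X, g y ∂μ) atTop (𝓝 (∫⁻ y, g y ∂μ)) := by
  simpa [withDensity_apply _ measurableSet_Iic] using tendsto_measure_Iic_atTop (μ.withDensity g)

lemma lintegral_Iic_le_conv_Ioi_mul_exp {ν μ : Measure ℝ} [SFinite ν] [SFinite μ] {s M : ℝ}
    {a : ℝ≥0∞} (hν : ∀ z ≥ M, a ≤ ν (Ioi z) * ENNReal.ofReal (Real.exp (z * s))) (x : ℝ) :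
    a * ∫⁻ y in Iic (x - M), ENNReal.ofReal (Real.exp (y * s)) ∂μ ≤
      (ν ∗ μ) (Ioi x) * ENNReal.ofReal (Real.exp (x * s)) := by
  rw [conv_apply _ _ measurableSet_Ioi, ← lintegral_mul_const' _ _ ENNReal.ofReal_ne_top,
    ← lintegral_const_mul _ (by fun_prop)]
  refine (setLIntegral_mono' measurableSet_Iic fun y (hy : y ≤ x - M) => ?_).trans
    (setLIntegral_le_lintegral _ _)
  have hexp : ENNReal.ofReal (Real.exp (x * s)) =
      ENNReal.ofReal (Real.exp ((x - y) * s)) * ENNReal.ofReal (Real.exp (y * s)) := by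
    rw [← ENNReal.ofReal_mul (Real.exp_pos _).le, ← Real.exp_add]; ring_nf
  rw [preimage_add_const_Ioi, hexp, ← mul_assoc]
  gcongr
  exact hν _ (by linarith)

/-- Let `μ` be a probability measure on `ℝ` supported on `[0, ∞)` and `s > 0`. If
`μ̄(x)·e^{x s}` converges to a positive constant `c > 0` as `x → +∞`, then for every `k ≥ 2`
one has `(μ^{∗k})‾(x)·e^{x s} → +∞` as `x → +∞`. -/
theorem tail_convPow_exp_tendsto_atTop (μ : Measure ℝ) [IsProbabilityMeasure μ]
    (hμ : μ (Set.Iio 0) = 0) (s : ℝ) (hs : 0 < s) (c : ℝ) (hc : 0 < c)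
    (h : Tendsto (fun x : ℝ => tail μ x * Real.exp (x * s)) atTop (𝓝 c))
    (k : ℕ) (hk : 2 ≤ k) :
    Tendsto (fun x : ℝ => tail (convPow μ k) x * Real.exp (x * s)) atTop atTop := by
  obtain ⟨m, rfl⟩ : ∃ m, k = m + 1 + 1 := ⟨k - 2, by omega⟩
  have hμs : Tendsto (fun x => μ (Ioi x) * ENNReal.ofReal (Real.exp (x * s))) atTop
      (𝓝 (ENNReal.ofReal c)) := by
    simpa only [ofReal_tail_mul] using ENNReal.tendsto_ofReal h
  have hmoment := lintegral_exp_mul_eq_top hs.le (ENNReal.ofReal_pos.2 hc).ne' hμs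
  obtain ⟨M, hM⟩ := eventually_atTop.1 <|
    hμs.eventually_const_le ((ENNReal.ofReal_lt_ofReal_iff hc).2 (half_lt_self hc))
  have hν : ∀ z ≥ M, ENNReal.ofReal (c / 2) ≤
      convPow μ (m + 1) (Ioi z) * ENNReal.ofReal (Real.exp (z * s)) := fun z hz =>
    (hM z hz).trans (by gcongr ?_ * _; exact measure_Ioi_le_conv_Ioi (convPow_Iio_zero hμ m) z)
  have hlower : Tendsto (fun x => ENNReal.ofReal (c / 2) *
      ∫⁻ y in Iic (x - M), ENNReal.ofReal (Real.exp (y * s)) ∂μ) atTop (𝓝 ∞) := by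
    have := ENNReal.Tendsto.const_mul (a := ENNReal.ofReal (c / 2))
      ((tendsto_setLIntegral_Iic_atTop μ fun y => ENNReal.ofReal (Real.exp (y * s))).comp
        (tendsto_atTop_add_const_right _ (-M) tendsto_id)) (Or.inl (by simp [hmoment]))
    simpa [hmoment, ENNReal.mul_top, hc, sub_eq_add_neg] using this
  rw [← ENNReal.tendsto_ofReal_nhds_top]
  simp_rw [ofReal_tail_mul]
  exact tendsto_nhds_top_mono hlower (.of_forall (lintegral_Iic_le_conv_Ioi_mul_exp hν))
end

section
/- Let μ be a probability measure on ℝ supported on [0, ∞) and define C(μ) := sup{ t ∈ ℝ : t ≥ 0 and μ̄(x)·e^{x t} → 0 as x → +∞ }. Then C is invariant under convolution: for every natural number k ≥ 1, C(μ^{∗k}) = C(μ). -/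
open MeasureTheory Filter Topology

/-- The parameter `C(μ) = sup { t ≥ 0 : μ̄(x)·e^{x t} → 0 as x → +∞ }`. -/
noncomputable def Cparam (μ : Measure ℝ) : ℝ :=
  sSup {t : ℝ | 0 ≤ t ∧ Tendsto (fun x : ℝ => tail μ x * Real.exp (x * t)) atTop (𝓝 0)}

/-!
Since `μ` lives on `[0, ∞)`, adding an independent copy only pushes mass to the right, so the
tails of `μ^{∗k}` dominate that of `μ` and every admissible exponent of `μ^{∗k}` is one of `μ`.
Conversely, if `μ̄(x) e^{xs} → 0` and `t < r < s`, the layer cake formula makes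
`M(r) = ∫ e^{rb} dμ` finite, and Chernoff's bound gives `μ^{∗k}((x, ∞)) ≤ e^{-rx} M(r)^k`, so `t`
is admissible for `μ^{∗k}`. Hence both sets of admissible exponents have the same upper bounds.
-/

open Set Real
open scoped ENNReal

section Bounds

variable {α : Type*}

lemma upperBounds_eq_of_Ico_subset [LinearOrder α] [DenselyOrdered α] {A B : Set α} {a : α}
    (hAB : A ⊆ B) (ha : a ∈ A) (hB : ∀ s ∈ B, Ico a s ⊆ A) :
    upperBounds A = upperBounds B := by
  refine (upperBounds_mono_set hAB).antisymm' fun M hM s hs => ?_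
  refine le_of_forall_lt_imp_le_of_dense fun t hts => ?_
  rcases lt_or_ge t a with hta | hat
  · exact hta.le.trans (hM ha)
  · exact hM (hB s hs ⟨hat, hts⟩)

lemma csSup_eq_csSup_of_upperBounds_eq [ConditionallyCompleteLinearOrder α] {A B : Set α}
    (hA : A.Nonempty) (hB : B.Nonempty) (h : upperBounds A = upperBounds B) :
    sSup A = sSup B := by
  by_cases hbdd : BddAbove A
  · exact (((isLUB_congr h).1 (isLUB_csSup hA hbdd)).csSup_eq hB).symm
  · have hbdd' : ¬BddAbove B := by rwa [BddAbove, ← h]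
    rw [ConditionallyCompleteLinearOrder.csSup_of_not_bddAbove A hbdd,
      ConditionallyCompleteLinearOrder.csSup_of_not_bddAbove B hbdd']

end Bounds

def decayExponents (μ : Measure ℝ) : Set ℝ :=
  {t | 0 ≤ t ∧ Tendsto (fun x => tail μ x * exp (x * t)) atTop (𝓝 0)}

lemma Cparam_eq_sSup_decayExponents (μ : Measure ℝ) : Cparam μ = sSup (decayExponents μ) := rfl

lemma tendsto_tail_atTop (μ : Measure ℝ) [IsFiniteMeasure μ] :
    Tendsto (tail μ) atTop (𝓝 0) := by
  have h := tendsto_measure_iInter_atTop (μ := μ) (s := Ioi)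
    (fun _ => measurableSet_Ioi.nullMeasurableSet) (fun _ _ => Ioi_subset_Ioi)
    ⟨0, measure_ne_top μ _⟩
  have hempty : ⋂ x : ℝ, Ioi x = ∅ := iInter_eq_empty_iff.2 fun y => ⟨y, lt_irrefl y⟩
  rw [hempty, measure_empty] at h
  exact (ENNReal.tendsto_toReal ENNReal.zero_ne_top).comp h

lemma zero_mem_decayExponents (μ : Measure ℝ) [IsFiniteMeasure μ] : 0 ∈ decayExponents μ :=
  ⟨le_rfl, by simpa using tendsto_tail_atTop μ⟩

lemma decayExponents_subset_of_tail_le {μ ν : Measure ℝ} (h : ∀ x, tail μ x ≤ tail ν x) :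
    decayExponents ν ⊆ decayExponents μ := fun _ ⟨ht, hν⟩ =>
  ⟨ht, squeeze_zero (fun _ => mul_nonneg ENNReal.toReal_nonneg (exp_nonneg _))
    (fun x => mul_le_mul_of_nonneg_right (h x) (exp_nonneg _)) hν⟩

lemma mem_decayExponents_of_measure_Ioi_le {ν : Measure ℝ} {t r : ℝ} {C : ℝ≥0∞}
    (ht : 0 ≤ t) (htr : t < r) (hC : C ≠ ∞)
    (h : ∀ x, ν (Ioi x) ≤ C * ENNReal.ofReal (exp (-(r * x)))) :
    t ∈ decayExponents ν := by
  have htail : ∀ x, tail ν x ≤ C.toReal * exp (-(r * x)) := fun x => by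
    simpa [tail, ENNReal.toReal_mul, ENNReal.toReal_ofReal (exp_nonneg _)] using
      ENNReal.toReal_mono (ENNReal.mul_ne_top hC ENNReal.ofReal_ne_top) (h x)
  have hlim : Tendsto (fun x => C.toReal * exp ((t - r) * x)) atTop (𝓝 0) := by
    simpa using (tendsto_exp_atBot.comp
      (tendsto_id.const_mul_atTop_of_neg (sub_neg.2 htr))).const_mul C.toReal
  refine ⟨ht, squeeze_zero (fun _ => mul_nonneg ENNReal.toReal_nonneg (exp_nonneg _))
    (fun x => ?_) hlim⟩
  calc tail ν x * exp (x * t) ≤ C.toReal * exp (-(r * x)) * exp (x * t) :=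
        mul_le_mul_of_nonneg_right (htail x) (exp_nonneg _)
    _ = C.toReal * exp ((t - r) * x) := by rw [mul_assoc, ← exp_add]; ring_nf

lemma exists_tail_le_mul_exp {μ : Measure ℝ} [IsFiniteMeasure μ] {s : ℝ}
    (hs : s ∈ decayExponents μ) : ∃ K, ∀ y, tail μ y ≤ K * exp (-(s * y)) := by
  obtain ⟨m, hm⟩ := eventually_atTop.1 (hs.2.eventually (ge_mem_nhds one_pos))
  refine ⟨max 1 (μ.real univ * exp (m * s)), fun y => ?_⟩
  have hbound : tail μ y * exp (y * s) ≤ max 1 (μ.real univ * exp (m * s)) := by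
    rcases le_total m y with hy | hy
    · exact (hm y hy).trans (le_max_left _ _)
    · exact le_max_of_le_right (mul_le_mul (measureReal_mono (subset_univ _))
        (exp_le_exp.2 (mul_le_mul_of_nonneg_right hy hs.1)) (exp_nonneg _) measureReal_nonneg)
  calc tail μ y = tail μ y * exp (y * s) * exp (-(s * y)) := by
        rw [mul_assoc, ← exp_add, mul_comm y s, add_neg_cancel, exp_zero, mul_one]
    _ ≤ _ := mul_le_mul_of_nonneg_right hbound (exp_nonneg _)

lemma lintegral_exp_mul_lt_top {μ : Measure ℝ} [IsFiniteMeasure μ] (hμ : ∀ᵐ b ∂μ, 0 ≤ b)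
    {r s K : ℝ} (hr : 0 ≤ r) (hrs : r < s) (hK : ∀ y, tail μ y ≤ K * exp (-(s * y))) :
    ∫⁻ b, ENNReal.ofReal (exp (r * b)) ∂μ < ∞ := by
  have hprim : ∀ b, ∫ t in (0)..b, r * exp (r * t) = exp (r * b) - 1 := fun b => by
    rw [intervalIntegral.integral_eq_sub_of_hasDerivAt
      (fun t _ => by simpa [mul_comm] using ((hasDerivAt_id t).const_mul r).exp)
      ((by fun_prop : Continuous fun t => r * exp (r * t)).intervalIntegrable 0 b)]
    simp
  have hcake : ∫⁻ b, ENNReal.ofReal (exp (r * b) - 1) ∂μ =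
      ∫⁻ t in Ioi 0, μ (Ioi t) * ENNReal.ofReal (r * exp (r * t)) := by
    simp_rw [← hprim]
    exact lintegral_comp_eq_lintegral_meas_lt_mul μ hμ aemeasurable_id
      (fun _ _ => (by fun_prop : Continuous fun t => r * exp (r * t)).intervalIntegrable _ _)
      (ae_of_all _ fun t => by positivity)
  have hdom : ∀ t, μ (Ioi t) * ENNReal.ofReal (r * exp (r * t)) ≤
      ENNReal.ofReal (K * r * exp ((r - s) * t)) := fun t => by
    rw [← ENNReal.ofReal_toReal (measure_ne_top μ (Ioi t)),
      ← ENNReal.ofReal_mul ENNReal.toReal_nonneg]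
    refine ENNReal.ofReal_le_ofReal ?_
    calc tail μ t * (r * exp (r * t)) ≤ K * exp (-(s * t)) * (r * exp (r * t)) :=
          mul_le_mul_of_nonneg_right (hK t) (by positivity)
      _ = K * r * exp ((r - s) * t) := by
          rw [show (r - s) * t = -(s * t) + r * t by ring, exp_add]; ring
  have hint : ∫⁻ t in Ioi 0, ENNReal.ofReal (K * r * exp ((r - s) * t)) < ∞ :=
    ((integrableOn_exp_mul_Ioi (sub_neg.2 hrs) 0).const_mul (K * r)).lintegral_lt_top
  calc ∫⁻ b, ENNReal.ofReal (exp (r * b)) ∂μ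
      ≤ ∫⁻ b, (ENNReal.ofReal (exp (r * b) - 1) + 1) ∂μ := lintegral_mono fun b => by
        simpa using ENNReal.ofReal_add_le (p := exp (r * b) - 1) (q := 1)
    _ = (∫⁻ t in Ioi 0, μ (Ioi t) * ENNReal.ofReal (r * exp (r * t))) + μ univ := by
        rw [lintegral_add_right _ measurable_const, hcake, lintegral_const, one_mul]
    _ < ∞ := ENNReal.add_lt_top.2
        ⟨(setLIntegral_mono' measurableSet_Ioi fun t _ => hdom t).trans_lt hint,
          measure_lt_top μ univ⟩

lemma measure_Ioi_le_exp_mul_lintegral_exp (ν : Measure ℝ) {r : ℝ} (hr : 0 ≤ r) (x : ℝ) :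
    ν (Ioi x) ≤ ENNReal.ofReal (exp (-(r * x))) * ∫⁻ b, ENNReal.ofReal (exp (r * b)) ∂ν := by
  rw [← lintegral_const_mul' _ _ ENNReal.ofReal_ne_top, ← setLIntegral_one]
  refine (setLIntegral_mono' measurableSet_Ioi fun b (hb : x < b) => ?_).trans
    (setLIntegral_le_lintegral _ _)
  rw [← ENNReal.ofReal_mul (exp_nonneg _), ← exp_add, ENNReal.one_le_ofReal, one_le_exp_iff]
  nlinarith

lemma lintegral_exp_mul_conv (ρ μ : Measure ℝ) [SFinite μ] (r : ℝ) :
    ∫⁻ b, ENNReal.ofReal (exp (r * b)) ∂(ρ.conv μ) =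
      (∫⁻ b, ENNReal.ofReal (exp (r * b)) ∂ρ) * ∫⁻ b, ENNReal.ofReal (exp (r * b)) ∂μ := by
  rw [Measure.lintegral_conv (by fun_prop)]
  simp_rw [mul_add, exp_add,
    ENNReal.ofReal_mul (exp_nonneg _), lintegral_const_mul' _ _ ENNReal.ofReal_ne_top]
  exact lintegral_mul_const _ (by fun_prop)

lemma conv_apply_Ioi (ρ μ : Measure ℝ) [SFinite ρ] [SFinite μ] (x : ℝ) :
    (ρ.conv μ) (Ioi x) = ∫⁻ b, ρ (Ioi (x - b)) ∂μ := by
  rw [Measure.conv, Measure.map_apply (by fun_prop) measurableSet_Ioi,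
    Measure.prod_apply_symm (measurableSet_Ioi.preimage (by fun_prop))]
  congr 1 with b
  congr 1 with a
  simp [sub_lt_iff_lt_add]

lemma measure_Ioi_le_conv (ρ μ : Measure ℝ) [SFinite ρ] [IsProbabilityMeasure μ]
    (hμ : ∀ᵐ b ∂μ, 0 ≤ b) (x : ℝ) : ρ (Ioi x) ≤ (ρ.conv μ) (Ioi x) := by
  rw [conv_apply_Ioi]
  calc ρ (Ioi x) = ∫⁻ _, ρ (Ioi x) ∂μ := by simp
    _ ≤ ∫⁻ b, ρ (Ioi (x - b)) ∂μ :=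
      lintegral_mono_ae (hμ.mono fun b hb => measure_mono (Ioi_subset_Ioi (by linarith)))

instance sFinite_convPow (μ : Measure ℝ) [SFinite μ] (k : ℕ) : SFinite (convPow μ k) := by
  induction k <;> rw [convPow] <;> infer_instance

instance isProbabilityMeasure_convPow (μ : Measure ℝ) [IsProbabilityMeasure μ] (k : ℕ) :
    IsProbabilityMeasure (convPow μ k) := by
  induction k <;> rw [convPow] <;> infer_instance

lemma convPow_one (μ : Measure ℝ) [SFinite μ] : convPow μ 1 = μ :=
  Measure.dirac_zero_conv μ

lemma measure_Ioi_le_convPow (μ : Measure ℝ) [IsProbabilityMeasure μ] (hμ : ∀ᵐ b ∂μ, 0 ≤ b)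
    {k : ℕ} (hk : 1 ≤ k) (x : ℝ) : μ (Ioi x) ≤ convPow μ k (Ioi x) := by
  have hmono : Monotone fun n => convPow μ n (Ioi x) :=
    monotone_nat_of_le_succ fun n => measure_Ioi_le_conv _ μ hμ x
  simpa [convPow_one] using hmono hk

lemma lintegral_exp_mul_convPow (μ : Measure ℝ) [SFinite μ] (r : ℝ) (k : ℕ) :
    ∫⁻ b, ENNReal.ofReal (exp (r * b)) ∂(convPow μ k) =
      (∫⁻ b, ENNReal.ofReal (exp (r * b)) ∂μ) ^ k := by
  induction k with
  | zero => simp [convPow]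
  | succ k ih => rw [convPow, lintegral_exp_mul_conv, ih, pow_succ]

lemma mem_decayExponents_convPow {μ : Measure ℝ} [IsProbabilityMeasure μ]
    (hμ : ∀ᵐ b ∂μ, 0 ≤ b) (k : ℕ) {s t : ℝ} (hs : s ∈ decayExponents μ) (ht : 0 ≤ t)
    (hts : t < s) : t ∈ decayExponents (convPow μ k) := by
  obtain ⟨r, htr, hrs⟩ := exists_between hts
  obtain ⟨K, hK⟩ := exists_tail_le_mul_exp hs
  have hM := lintegral_exp_mul_lt_top hμ (ht.trans htr.le) hrs hK
  refine mem_decayExponents_of_measure_Ioi_le ht htr (ENNReal.pow_ne_top (n := k) hM.ne) fun x => ?_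
  calc convPow μ k (Ioi x)
      ≤ ENNReal.ofReal (exp (-(r * x))) * ∫⁻ b, ENNReal.ofReal (exp (r * b)) ∂(convPow μ k) :=
        measure_Ioi_le_exp_mul_lintegral_exp _ (ht.trans htr.le) x
    _ = _ := by rw [lintegral_exp_mul_convPow, mul_comm]

/-- For a probability measure `μ` on `ℝ` supported on `[0, ∞)`, the parameter `C` is
invariant under convolution: `C(μ^{∗k}) = C(μ)` for every `k ≥ 1`. -/
theorem Cparam_convPow (μ : Measure ℝ) [IsProbabilityMeasure μ]
    (hμ : μ (Set.Iio 0) = 0) (k : ℕ) (hk : 1 ≤ k) :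
    Cparam (convPow μ k) = Cparam μ := by
  have hμ' : ∀ᵐ b ∂μ, 0 ≤ b := ae_iff.2 (by simp only [not_le]; exact hμ)
  have hsub : decayExponents (convPow μ k) ⊆ decayExponents μ :=
    decayExponents_subset_of_tail_le fun x =>
      ENNReal.toReal_mono (measure_ne_top _ _) (measure_Ioi_le_convPow μ hμ' hk x)
  have h0 := zero_mem_decayExponents (convPow μ k)
  rw [Cparam_eq_sSup_decayExponents, Cparam_eq_sSup_decayExponents]
  refine csSup_eq_csSup_of_upperBounds_eq ⟨0, h0⟩ ⟨0, hsub h0⟩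
    (upperBounds_eq_of_Ico_subset hsub h0 fun s hs t ⟨ht, hts⟩ => ?_)
  exact mem_decayExponents_convPow hμ' k hs ht hts
end

section
/- Let μ be a probability measure on ℝ supported on [0, ∞) with a continuous density f with respect to Lebesgue measure, and suppose μ̄(x) > 0 for all x. If the hazard rate m(x) := f(x)/μ̄(x) converges to a finite limit L ≥ 0 as x → +∞, then C(μ) = L, where C(μ) := sup{ t ∈ ℝ : t ≥ 0 and μ̄(x)·e^{x t} → 0 as x → +∞ }. -/
open MeasureTheory Filter Topology

/-! Write `g = μ̄`, so that `g' = -f`. The derivative of `g x * exp (a * x)` is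
`(a * g x - f x) * exp (a * x)`, so this product is eventually antitone when the hazard rate
eventually exceeds `a`, and eventually monotone when it stays below `a`. Hence `g x * exp (x * t)`
tends to `0` for every `t` below the limit `L` of the hazard rate and to `∞` for every `t` above
it, which pins the supremum defining `C(μ)` at `L`. -/

open Set Real

section HazardRate

variable {g f : ℝ → ℝ}

theorem hasDerivAt_mul_exp_mul {g' : ℝ} (a : ℝ) {x : ℝ} (hg : HasDerivAt g g' x) :
    HasDerivAt (fun y => g y * exp (a * y)) ((a * g x + g') * exp (a * x)) x := by
  have h : HasDerivAt (fun y => g y * exp (a * y))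
      (g' * exp (a * x) + g x * (exp (a * x) * (a * 1))) x :=
    hg.mul ((hasDerivAt_id' x).const_mul a).exp
  convert h using 1
  ring

theorem antitoneOn_mul_exp_of_le_hazard (hg : ∀ x, HasDerivAt g (-f x) x)
    (hpos : ∀ x, 0 < g x) {a x₀ : ℝ} (ha : ∀ x ∈ Ioi x₀, a ≤ f x / g x) :
    AntitoneOn (fun x => g x * exp (a * x)) (Ici x₀) := by
  refine antitoneOn_of_hasDerivWithinAt_nonpos (convex_Ici x₀)
    (fun x _ => (hasDerivAt_mul_exp_mul a (hg x)).continuousAt.continuousWithinAt)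
    (fun x _ => (hasDerivAt_mul_exp_mul a (hg x)).hasDerivWithinAt) fun x hx => ?_
  rw [interior_Ici] at hx
  have := (le_div_iff₀ (hpos x)).1 (ha x hx)
  exact mul_nonpos_of_nonpos_of_nonneg (by linarith) (exp_pos _).le

theorem monotoneOn_mul_exp_of_hazard_le (hg : ∀ x, HasDerivAt g (-f x) x)
    (hpos : ∀ x, 0 < g x) {a x₀ : ℝ} (ha : ∀ x ∈ Ioi x₀, f x / g x ≤ a) :
    MonotoneOn (fun x => g x * exp (a * x)) (Ici x₀) := by
  refine monotoneOn_of_hasDerivWithinAt_nonneg (convex_Ici x₀)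
    (fun x _ => (hasDerivAt_mul_exp_mul a (hg x)).continuousAt.continuousWithinAt)
    (fun x _ => (hasDerivAt_mul_exp_mul a (hg x)).hasDerivWithinAt) fun x hx => ?_
  rw [interior_Ici] at hx
  have := (div_le_iff₀ (hpos x)).1 (ha x hx)
  exact mul_nonneg (by linarith) (exp_pos _).le

theorem tendsto_mul_exp_nhds_zero_of_lt_hazard (hg : ∀ x, HasDerivAt g (-f x) x)
    (hpos : ∀ x, 0 < g x) {a t : ℝ} (hta : t < a)
    (ha : ∀ᶠ x in atTop, a < f x / g x) :
    Tendsto (fun x => g x * exp (x * t)) atTop (𝓝 0) := by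
  obtain ⟨x₀, hx₀⟩ := ha.exists_forall_of_atTop
  have hanti := antitoneOn_mul_exp_of_le_hazard hg hpos fun x hx => (hx₀ x (le_of_lt hx)).le
  have hdecay : Tendsto (fun x => g x₀ * exp (a * x₀) * exp ((t - a) * x)) atTop (𝓝 0) := by
    simpa using (tendsto_exp_atBot.comp
      (tendsto_id.const_mul_atTop_of_neg (sub_neg.2 hta))).const_mul (g x₀ * exp (a * x₀))
  refine squeeze_zero' (.of_forall fun x => (mul_pos (hpos x) (exp_pos _)).le) ?_ hdecay
  filter_upwards [eventually_ge_atTop x₀] with x hx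
  calc g x * exp (x * t) = g x * exp (a * x) * exp ((t - a) * x) := by
        rw [mul_assoc, ← exp_add]; ring_nf
    _ ≤ g x₀ * exp (a * x₀) * exp ((t - a) * x) :=
        mul_le_mul_of_nonneg_right (hanti self_mem_Ici hx hx) (exp_pos _).le

theorem tendsto_mul_exp_atTop_of_hazard_lt (hg : ∀ x, HasDerivAt g (-f x) x)
    (hpos : ∀ x, 0 < g x) {a t : ℝ} (hat : a < t)
    (ha : ∀ᶠ x in atTop, f x / g x < a) :
    Tendsto (fun x => g x * exp (x * t)) atTop atTop := by
  obtain ⟨x₀, hx₀⟩ := ha.exists_forall_of_atTop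
  have hmono := monotoneOn_mul_exp_of_hazard_le hg hpos fun x hx => (hx₀ x (le_of_lt hx)).le
  have hgrowth : Tendsto (fun x => g x₀ * exp (a * x₀) * exp ((t - a) * x)) atTop atTop :=
    (tendsto_exp_atTop.comp (tendsto_id.const_mul_atTop (sub_pos.2 hat))).const_mul_atTop
      (mul_pos (hpos x₀) (exp_pos _))
  refine tendsto_atTop_mono' atTop ?_ hgrowth
  filter_upwards [eventually_ge_atTop x₀] with x hx
  calc g x₀ * exp (a * x₀) * exp ((t - a) * x) ≤ g x * exp (a * x) * exp ((t - a) * x) :=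
        mul_le_mul_of_nonneg_right (hmono self_mem_Ici hx hx) (exp_pos _).le
    _ = g x * exp (x * t) := by
        rw [mul_assoc, ← exp_add]; ring_nf

theorem sSup_exp_decay_rates_eq_of_tendsto_hazard (hg : ∀ x, HasDerivAt g (-f x) x)
    (hpos : ∀ x, 0 < g x) (hg0 : Tendsto g atTop (𝓝 0)) {L : ℝ}
    (hm : Tendsto (fun x => f x / g x) atTop (𝓝 L)) :
    sSup {t : ℝ | 0 ≤ t ∧ Tendsto (fun x => g x * exp (x * t)) atTop (𝓝 0)} = L := by
  have hzero : 0 ≤ (0 : ℝ) ∧ Tendsto (fun x => g x * exp (x * 0)) atTop (𝓝 0) :=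
    ⟨le_rfl, by simpa using hg0⟩
  refine csSup_eq_of_forall_le_of_forall_lt_exists_gt ⟨0, hzero⟩ (fun t ⟨_, ht⟩ => ?_)
    fun w hw => ?_
  · by_contra! hLt
    obtain ⟨a, hLa, hat⟩ := exists_between hLt
    exact not_tendsto_nhds_of_tendsto_atTop
      (tendsto_mul_exp_atTop_of_hazard_lt hg hpos hat (hm.eventually_lt_const hLa)) 0 ht
  · rcases lt_or_ge w 0 with hw0 | hw0
    · exact ⟨0, hzero, hw0⟩
    obtain ⟨t, hwt, htL⟩ := exists_between hw
    obtain ⟨a, hta, haL⟩ := exists_between htL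
    exact ⟨t, ⟨hw0.trans hwt.le, tendsto_mul_exp_nhds_zero_of_lt_hazard hg hpos hta
      (hm.eventually_const_lt haL)⟩, hwt⟩

end HazardRate

section Density

variable {α : Type*} [MeasurableSpace α] {ν : Measure α} {f : α → ℝ}

theorem toReal_withDensity_ofReal_apply (hfm : AEStronglyMeasurable f ν) (hf : 0 ≤ᵐ[ν] f)
    {s : Set α} (hs : MeasurableSet s) :
    ((ν.withDensity fun x => ENNReal.ofReal (f x)) s).toReal = ∫ x in s, f x ∂ν := by
  rw [withDensity_apply _ hs, integral_eq_lintegral_of_nonneg_ae (ae_restrict_of_ae hf)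
    hfm.restrict]

theorem integrable_of_isFiniteMeasure_withDensity_ofReal (hfm : AEStronglyMeasurable f ν)
    (hf : 0 ≤ᵐ[ν] f) [IsFiniteMeasure (ν.withDensity fun x => ENNReal.ofReal (f x))] :
    Integrable f ν := by
  refine ⟨hfm, (hasFiniteIntegral_iff_ofReal hf).2 ?_⟩
  rw [← setLIntegral_univ, ← withDensity_apply _ MeasurableSet.univ]
  exact measure_lt_top _ _

end Density

theorem hasDerivAt_integral_Ioi {E : Type*} [NormedAddCommGroup E] [NormedSpace ℝ E]
    [CompleteSpace E] {f : ℝ → E} (hfi : Integrable f) {x : ℝ} (hf : ContinuousAt f x) :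
    HasDerivAt (fun y => ∫ t in Ioi y, f t) (-f x) x := by
  have hsplit :
      (fun y => ∫ t in Ioi y, f t) = fun y => (∫ t in Ioi x, f t) - ∫ t in x..y, f t :=
    funext fun y => by
      rw [← intervalIntegral.integral_Ioi_sub_Ioi' hfi.integrableOn hfi.integrableOn,
        sub_sub_cancel]
  rw [hsplit, ← zero_sub]
  exact (hasDerivAt_const x _).sub (intervalIntegral.integral_hasDerivAt_right
    hfi.intervalIntegrable (hfi.aestronglyMeasurable.stronglyMeasurableAtFilter) hf)

theorem Cparam_eq_limit_hazardRate_general (μ : Measure ℝ) [IsProbabilityMeasure μ]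
    (f : ℝ → ℝ) (hf_cont : Continuous f) (hf_nonneg : ∀ x, 0 ≤ f x)
    (hdens : μ = volume.withDensity fun x => ENNReal.ofReal (f x))
    (htail : ∀ x : ℝ, 0 < tail μ x)
    (L : ℝ)
    (hm : Tendsto (fun x : ℝ => f x / tail μ x) atTop (𝓝 L)) :
    Cparam μ = L := by
  subst hdens
  have hf_ae : 0 ≤ᵐ[volume] f := .of_forall hf_nonneg
  have htail_eq : tail (volume.withDensity fun x => ENNReal.ofReal (f x)) =
      fun x => ∫ y in Ioi x, f y :=
    funext fun _ => toReal_withDensity_ofReal_apply hf_cont.aestronglyMeasurable hf_ae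
      measurableSet_Ioi
  have hfi : Integrable f :=
    integrable_of_isFiniteMeasure_withDensity_ofReal hf_cont.aestronglyMeasurable hf_ae
  rw [Cparam, htail_eq]
  rw [htail_eq] at htail hm
  exact sSup_exp_decay_rates_eq_of_tendsto_hazard
    (fun _ => hasDerivAt_integral_Ioi hfi hf_cont.continuousAt) htail
    (tendsto_integral_Ioi_zero tendsto_id) hm

/-- Let `μ` be a probability measure on `ℝ` supported on `[0, ∞)` with a continuous
nonnegative density `f` with respect to Lebesgue measure, and suppose `μ̄(x) > 0` for all
`x`.  If the hazard rate `m(x) = f(x)/μ̄(x)` converges to a finite limit `L ≥ 0` as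
`x → +∞`, then `C(μ) = L`. -/
theorem Cparam_eq_limit_hazardRate (μ : Measure ℝ) [IsProbabilityMeasure μ]
    (f : ℝ → ℝ) (hf_cont : Continuous f) (hf_nonneg : ∀ x, 0 ≤ f x)
    (hdens : μ = volume.withDensity fun x => ENNReal.ofReal (f x))
    (hμ : μ (Set.Iio 0) = 0)
    (htail : ∀ x : ℝ, 0 < tail μ x)
    (L : ℝ) (hL : 0 ≤ L)
    (hm : Tendsto (fun x : ℝ => f x / tail μ x) atTop (𝓝 L)) :
    Cparam μ = L :=
  Cparam_eq_limit_hazardRate_general μ f hf_cont hf_nonneg hdens htail L hm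
end

section
/- Let (ξ_i)_{i∈ℕ} be i.i.d. integrable nonnegative real-valued random variables on a probability space, let N be an ℕ-valued integrable random variable independent of the sequence (ξ_i), and set S := Σ_{i<N} ξ_i. Then S is integrable and E[S] = E[N]·E[ξ_0] (Wald's identity for the random sum). -/
/-!
Write `S = ∑' i, 1{i < N} ξᵢ`. Since `N` is independent of each `ξᵢ`, monotone convergence and the
product rule for independent nonnegative variables give `E[S] = ∑' i, P(i < N) E[ξᵢ]`, and
`∑' i, P(i < N) = E[N]` is the tail-sum formula. Working in `ℝ≥0∞` makes every interchange free;
integrability of `S` then comes from the finiteness of the right-hand side.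
-/

open MeasureTheory ProbabilityTheory Finset
open scoped ENNReal

lemma sum_range_eq_tsum_indicator {α M : Type*} [AddCommMonoid M] [TopologicalSpace M]
    (N : α → ℕ) (f : ℕ → α → M) (a : α) :
    ∑ i ∈ range (N a), f i a = ∑' i, {x | i < N x}.indicator (f i) a := by
  rw [tsum_eq_sum (s := range (N a)) fun i hi => Set.indicator_of_notMem (by simpa using hi) _]
  exact sum_congr rfl fun i hi =>
    (Set.indicator_of_mem (s := {x | i < N x}) (mem_range.1 hi) (f i)).symm

lemma measurable_sum_range {α M : Type*} [MeasurableSpace α] [AddCommMonoid M] [MeasurableSpace M]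
    [MeasurableAdd₂ M] {N : α → ℕ} {f : ℕ → α → M} (hN : Measurable N)
    (hf : ∀ i, Measurable (f i)) :
    Measurable fun a => ∑ i ∈ range (N a), f i a := by
  have hsum : Measurable fun p : α × ℕ => ∑ i ∈ range p.2, f i p.1 :=
    measurable_from_prod_countable_left fun n => measurable_sum (range n) fun i _ => hf i
  exact hsum.comp (measurable_id.prodMk hN)

section Lintegral

variable {Ω : Type*} [MeasurableSpace Ω] {μ : Measure Ω} {N : Ω → ℕ}

lemma lintegral_indicator_preimage_of_indepFun {β : Type*} [MeasurableSpace β] {X : Ω → β}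
    {Y : Ω → ℝ≥0∞} (hX : Measurable X) (hY : Measurable Y) (hXY : IndepFun X Y μ)
    {t : Set β} (ht : MeasurableSet t) :
    ∫⁻ ω, (X ⁻¹' t).indicator Y ω ∂μ = μ (X ⁻¹' t) * ∫⁻ ω, Y ω ∂μ := by
  have hcomp : (X ⁻¹' t).indicator (1 : Ω → ℝ≥0∞) = t.indicator 1 ∘ X :=
    funext fun ω => Set.indicator_comp_right (g := (1 : β → ℝ≥0∞)) X
  have hindep : IndepFun ((X ⁻¹' t).indicator 1) Y μ :=
    hcomp ▸ hXY.comp (measurable_one.indicator ht) measurable_id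
  calc ∫⁻ ω, (X ⁻¹' t).indicator Y ω ∂μ = ∫⁻ ω, (X ⁻¹' t).indicator 1 ω * Y ω ∂μ :=
        lintegral_congr fun ω => by simpa using Set.indicator_mul_left (i := ω) (X ⁻¹' t) 1 Y
    _ = μ (X ⁻¹' t) * ∫⁻ ω, Y ω ∂μ := by
      rw [lintegral_mul_eq_lintegral_mul_lintegral_of_indepFun''
        (measurable_one.indicator (hX ht)).aemeasurable hY.aemeasurable hindep,
        lintegral_indicator_one (hX ht)]

lemma lintegral_natCast_eq_tsum_measure_lt (hN : Measurable N) :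
    ∫⁻ ω, (N ω : ℝ≥0∞) ∂μ = ∑' i, μ {ω | i < N ω} := by
  have hN_eq : ∀ ω, (N ω : ℝ≥0∞) = ∑' i, {ω | i < N ω}.indicator 1 ω := fun ω => by
    simpa using sum_range_eq_tsum_indicator N (fun _ => (1 : Ω → ℝ≥0∞)) ω
  have hlt : ∀ i, MeasurableSet {ω | i < N ω} := fun i => hN measurableSet_Ioi
  simp_rw [hN_eq]
  rw [lintegral_tsum fun i => (measurable_one.indicator (hlt i)).aemeasurable]
  exact tsum_congr fun i => lintegral_indicator_one (hlt i)

lemma lintegral_sum_range_eq_tsum {ξ : ℕ → Ω → ℝ≥0∞} (hN : Measurable N)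
    (hξ : ∀ i, Measurable (ξ i)) (hindep : ∀ i, IndepFun N (ξ i) μ) :
    ∫⁻ ω, ∑ i ∈ range (N ω), ξ i ω ∂μ = ∑' i, μ {ω | i < N ω} * ∫⁻ ω, ξ i ω ∂μ := by
  have hlt : ∀ i, MeasurableSet {ω | i < N ω} := fun i => hN measurableSet_Ioi
  simp_rw [sum_range_eq_tsum_indicator N ξ]
  rw [lintegral_tsum fun i => ((hξ i).indicator (hlt i)).aemeasurable]
  exact tsum_congr fun i =>
    lintegral_indicator_preimage_of_indepFun hN (hξ i) (hindep i) measurableSet_Ioi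

lemma lintegral_sum_range_eq_mul {ξ : ℕ → Ω → ℝ≥0∞} (hN : Measurable N)
    (hξ : ∀ i, Measurable (ξ i)) (hindep : ∀ i, IndepFun N (ξ i) μ)
    (hmean : ∀ i, ∫⁻ ω, ξ i ω ∂μ = ∫⁻ ω, ξ 0 ω ∂μ) :
    ∫⁻ ω, ∑ i ∈ range (N ω), ξ i ω ∂μ = (∫⁻ ω, (N ω : ℝ≥0∞) ∂μ) * ∫⁻ ω, ξ 0 ω ∂μ := by
  rw [lintegral_sum_range_eq_tsum hN hξ hindep, lintegral_natCast_eq_tsum_measure_lt hN,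
    ← ENNReal.tsum_mul_right]
  simp_rw [hmean]

lemma integrable_and_integral_eq_of_lintegral_ofReal_eq {f : Ω → ℝ}
    (hf : AEStronglyMeasurable f μ) (hf_nonneg : 0 ≤ᵐ[μ] f) {c : ℝ} (hc : 0 ≤ c)
    (hlin : ∫⁻ ω, ENNReal.ofReal (f ω) ∂μ = ENNReal.ofReal c) :
    Integrable f μ ∧ ∫ ω, f ω ∂μ = c := by
  refine ⟨⟨hf, (hasFiniteIntegral_iff_ofReal hf_nonneg).2 (hlin ▸ ENNReal.ofReal_lt_top)⟩, ?_⟩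
  rw [integral_eq_lintegral_of_nonneg_ae hf_nonneg hf, hlin, ENNReal.toReal_ofReal hc]

end Lintegral

theorem wald_identity_general
    {Ω : Type*} [MeasurableSpace Ω] (P : Measure Ω)
    (ξ : ℕ → Ω → ℝ) (hmeas : ∀ i, Measurable (ξ i))
    (hident : ∀ i, IdentDistrib (ξ i) (ξ 0) P P)
    (hnonneg : ∀ i ω, 0 ≤ ξ i ω)
    (hint : Integrable (ξ 0) P)
    (N : Ω → ℕ) (hN : Measurable N)
    (hNint : Integrable (fun ω => (N ω : ℝ)) P)
    (hNindep : IndepFun N (fun ω => fun i => ξ i ω) P) :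
    Integrable (fun ω => ∑ i ∈ Finset.range (N ω), ξ i ω) P ∧
      ∫ ω, (∑ i ∈ Finset.range (N ω), ξ i ω) ∂P
        = (∫ ω, (N ω : ℝ) ∂P) * ∫ ω, ξ 0 ω ∂P := by
  have hEN : ∫⁻ ω, (N ω : ℝ≥0∞) ∂P = ENNReal.ofReal (∫ ω, (N ω : ℝ) ∂P) := by
    simp [ofReal_integral_eq_lintegral_ofReal hNint (ae_of_all _ fun ω => Nat.cast_nonneg (N ω))]
  have hEξ : ∫⁻ ω, ENNReal.ofReal (ξ 0 ω) ∂P = ENNReal.ofReal (∫ ω, ξ 0 ω ∂P) :=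
    (ofReal_integral_eq_lintegral_ofReal hint (ae_of_all _ (hnonneg 0))).symm
  have hlin : ∫⁻ ω, ENNReal.ofReal (∑ i ∈ range (N ω), ξ i ω) ∂P
      = ENNReal.ofReal ((∫ ω, (N ω : ℝ) ∂P) * ∫ ω, ξ 0 ω ∂P) := by
    simp_rw [ENNReal.ofReal_sum_of_nonneg fun i _ => hnonneg i _]
    rw [lintegral_sum_range_eq_mul hN (fun i => (hmeas i).ennreal_ofReal)
      (fun i => (hNindep.comp measurable_id
        (ENNReal.measurable_ofReal.comp (measurable_pi_apply i)) :))
      (fun i => ((hident i).comp ENNReal.measurable_ofReal).lintegral_eq),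
      hEN, hEξ, ENNReal.ofReal_mul (integral_nonneg fun ω => Nat.cast_nonneg (N ω))]
  exact integrable_and_integral_eq_of_lintegral_ofReal_eq
    (measurable_sum_range hN hmeas).aestronglyMeasurable
    (ae_of_all _ fun ω => sum_nonneg fun i _ => hnonneg i ω)
    (mul_nonneg (integral_nonneg fun ω => Nat.cast_nonneg (N ω)) (integral_nonneg (hnonneg 0))) hlin

/-- Wald's identity: if `(ξ i)` are i.i.d. integrable nonnegative real random variables and
`N` is an `ℕ`-valued integrable random variable independent of the whole sequence `(ξ i)`,
then the random sum `S = Σ_{i<N} ξ i` is integrable and `E[S] = E[N]·E[ξ 0]`. -/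
theorem wald_identity
    {Ω : Type*} [MeasurableSpace Ω] (P : Measure Ω) [IsProbabilityMeasure P]
    (ξ : ℕ → Ω → ℝ) (hmeas : ∀ i, Measurable (ξ i))
    (hindep : iIndepFun ξ P)
    (hident : ∀ i, IdentDistrib (ξ i) (ξ 0) P P)
    (hnonneg : ∀ i ω, 0 ≤ ξ i ω)
    (hint : Integrable (ξ 0) P)
    (N : Ω → ℕ) (hN : Measurable N)
    (hNint : Integrable (fun ω => (N ω : ℝ)) P)
    (hNindep : IndepFun N (fun ω => fun i => ξ i ω) P) :
    Integrable (fun ω => ∑ i ∈ Finset.range (N ω), ξ i ω) P ∧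
      ∫ ω, (∑ i ∈ Finset.range (N ω), ξ i ω) ∂P
        = (∫ ω, (N ω : ℝ) ∂P) * ∫ ω, ξ 0 ω ∂P :=
  wald_identity_general P ξ hmeas hident hnonneg hint N hN hNint hNindep
end
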